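/- Let M be a finite family of 3-state characters on a finite set of taxa X, let c be a character of M, and let i be a dependent state of c. Then there is no set C of binarized characters of M such that C contains c(i), every two characters in C have a perfect phylogeny (as a pair of 2-state characters), and for each character f of M at least two of the three binarized characters f(0), f(1), f(2) belong to C. -/

import Mathlib

/-- A perfect phylogeny for a family of `k`-state characters `chars` (indexed by `F`)
on a finite set of taxa `X`: a finite tree `T` with a labeling `ℓ` of its vertices by
full state-assignments, such that every taxon's state-assignment occurs at some vertex,
and for each character and state the vertices carrying that state induce a connected
subgraph of `T`. -/
def PerfectPhylogeny {X F : Type} [Fintype X] [Fintype F] (k : ℕ)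
    (chars : F → X → Fin k) : Prop :=
  ∃ (V : Type) (_ : Fintype V) (T : SimpleGraph V) (ℓ : V → F → Fin k),
    T.IsTree ∧
    (∀ x : X, ∃ v : V, ∀ f : F, ℓ v f = chars f x) ∧
    ∀ (f : F) (s : Fin k), (T.induce {v : V | ℓ v f = s}).Preconnected

/-- Two characters `a, b` have a perfect phylogeny (as a two-member family). -/
def PairPP {X : Type} [Fintype X] (k : ℕ) (a b : X → Fin k) : Prop :=
  PerfectPhylogeny k ![a, b]

/-- The subfamily of `chars` indexed by the finite set `S` has a perfect phylogeny. -/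
def SubPP {X F : Type} [Fintype X] [Fintype F] (k : ℕ) (chars : F → X → Fin k)
    (S : Finset F) : Prop :=
  PerfectPhylogeny k (fun f : {x // x ∈ S} => chars f.1)

/-- A family of characters is pairwise compatible if every two of its characters
have a perfect phylogeny. -/
def PairwiseCompatible {X F : Type} [Fintype X] [Fintype F] (k : ℕ)
    (chars : F → X → Fin k) : Prop :=
  ∀ a b : F, a ≠ b → PairPP k (chars a) (chars b)

/-- The partition intersection graph of two characters `a, b`.  The vertex `(false, i)`
represents state `i` of `a` and `(true, j)` represents state `j` of `b`; there is an
edge between `(false, i)` and `(true, j)` exactly when some taxon has state `i` for `a`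
and state `j` for `b`, and no edges between vertices of the same character. -/
def pig {X : Type} {k : ℕ} (a b : X → Fin k) : SimpleGraph (Bool × Fin k) where
  Adj u v :=
    (u.1 = false ∧ v.1 = true ∧ ∃ x, a x = u.2 ∧ b x = v.2) ∨
    (u.1 = true ∧ v.1 = false ∧ ∃ x, a x = v.2 ∧ b x = u.2)
  symm := by
    refine ⟨?_⟩
    rintro ⟨ub, us⟩ ⟨vb, vs⟩ (⟨h1, h2, x, hx⟩ | ⟨h1, h2, x, hx⟩) <;>
      subst h1 <;> subst h2
    · exact Or.inr ⟨rfl, rfl, x, hx⟩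
    · exact Or.inl ⟨rfl, rfl, x, hx⟩
  loopless := by
    refine ⟨?_⟩
    rintro ⟨ub, us⟩ (⟨h1, h2, -⟩ | ⟨h1, h2, -⟩) <;> simp_all

/-- The binarized character `c(i)` of a 3-state character `c`: state `0` on taxa
where `c` has state `i`, and state `1` elsewhere. -/
def bin {X : Type} (c : X → Fin 3) (i : Fin 3) : X → Fin 2 :=
  fun x => if c x = i then 0 else 1

/-- State `i` of character `c` (of the family `chars`) is dependent: some character `d`
has two distinct states `j, k` such that `c(i)` is incompatible with both `d(j)` and `d(k)`. -/
def DependentState {X F : Type} [Fintype X] [Fintype F] (chars : F → X → Fin 3)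
    (c : F) (i : Fin 3) : Prop :=
  ∃ (d : F) (j k : Fin 3), j ≠ k ∧
    ¬ PairPP 2 (bin (chars c) i) (bin (chars d) j) ∧
    ¬ PairPP 2 (bin (chars c) i) (bin (chars d) k)

/-- `d` is a witness that state `i` of `c` is dependent. -/
def WitnessOf {X F : Type} [Fintype X] [Fintype F] (chars : F → X → Fin 3)
    (c : F) (i : Fin 3) (d : F) : Prop :=
  ∃ j k : Fin 3, j ≠ k ∧
    ¬ PairPP 2 (bin (chars c) i) (bin (chars d) j) ∧
    ¬ PairPP 2 (bin (chars c) i) (bin (chars d) k)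

/-- The graph `G` contains a path of length four (five pairwise distinct vertices,
four edges) whose middle vertex is `m`. -/
def HasPathLen4Mid {V : Type} (G : SimpleGraph V) (m : V) : Prop :=
  ∃ p : Fin 5 → V, Function.Injective p ∧
    (∀ t : Fin 4, G.Adj (p t.castSucc) (p t.succ)) ∧ p 2 = m

/-- Some taxon realizes the pair of states `(i, j)` for the pair of characters `(u, v)`. -/
def realizes {X : Type} (u v : X → Fin 3) (i j : Fin 3) : Prop :=
  ∃ t, u t = i ∧ v t = j

lemma Fin.exists_eq_of_ne_of_ne_three {j k j' k' : Fin 3} (hjk : j ≠ k) (hjk' : j' ≠ k') :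
    ∃ s, (s = j ∨ s = k) ∧ (s = j' ∨ s = k') := by
  revert j k j' k'
  decide

lemma WitnessOf.not_pairPP_of_ne {X F : Type} [Fintype X] [Fintype F]
    {chars : F → X → Fin 3} {c d : F} {i : Fin 3} (hd : WitnessOf chars c i d)
    {j' k' : Fin 3} (hjk' : j' ≠ k') :
    ¬ PairPP 2 (bin (chars c) i) (bin (chars d) j') ∨
      ¬ PairPP 2 (bin (chars c) i) (bin (chars d) k') := by
  obtain ⟨j, k, hjk, hj, hk⟩ := hd
  obtain ⟨s, hs, hs'⟩ := Fin.exists_eq_of_ne_of_ne_three hjk hjk'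
  have hs_incompatible : ¬ PairPP 2 (bin (chars c) i) (bin (chars d) s) := by
    rcases hs with rfl | rfl <;> assumption
  rcases hs' with rfl | rfl
  exacts [Or.inl hs_incompatible, Or.inr hs_incompatible]

/-- if state `i` of character `c` is dependent, then no pairwise compatible
selection `C` of binarized characters containing `c(i)` can include at least two
binarizations of every character. -/
theorem dependent_state_not_selected
    {X F : Type} [Fintype X] [Fintype F] (chars : F → X → Fin 3)
    (c : F) (i : Fin 3) (h : DependentState chars c i) :
    ¬ ∃ C : Finset (F × Fin 3),
        (c, i) ∈ C ∧
        (∀ p ∈ C, ∀ q ∈ C, PairPP 2 (bin (chars p.1) p.2) (bin (chars q.1) q.2)) ∧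
        (∀ f : F, ∃ j k : Fin 3, j ≠ k ∧ (f, j) ∈ C ∧ (f, k) ∈ C) := by
  obtain ⟨d, hd⟩ : ∃ d, WitnessOf chars c i d := h
  rintro ⟨C, hci, hpair, hsel⟩
  obtain ⟨j', k', hjk', hj', hk'⟩ := hsel d
  rcases hd.not_pairPP_of_ne hjk' with hn | hn
  exacts [hn (hpair _ hci _ hj'), hn (hpair _ hci _ hk')]
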